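/- Let V be a finite-dimensional vector space, let V₁, V₂, V₃ ∈ V be linearly independent, and let E = span{V₁, V₂, V₃}. Suppose β : V × V → V is a bilinear alternating map with β(V₁,V₂) = V₃ and β(V₂,V₃) ∉ E. If v = aV₁ + bV₂ + cV₃ satisfies β(Vᵢ, v) ∈ E for i = 1,2,3, then c = 0. -/

import Mathlib

theorem Submodule.eq_zero_of_add_smul_mem {K M : Type*} [DivisionRing K] [AddCommGroup M]
    [Module K M] {p : Submodule K M} {x y : M} {c : K} (hx : x ∈ p) (hy : y ∉ p)
    (h : x + c • y ∈ p) : c = 0 := by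
  by_contra hc
  exact hy ((p.smul_mem_iff hc).mp ((p.add_mem_iff_right hx).mp h))

theorem LinearMap.IsAlt.apply_smul_add_smul_add_smul {R M : Type*} [CommRing R]
    [AddCommGroup M] [Module R M] {β : M →ₗ[R] M →ₗ[R] M} (hβ : β.IsAlt)
    (x y z : M) (a b c : R) :
    β y (a • x + b • y + c • z) = -(a • β x y) + c • β y z := by
  rw [map_add, map_add, map_smul, map_smul, map_smul, hβ.self_eq_zero, ← hβ.neg, smul_neg,
    smul_zero, add_zero]

theorem kernel_contained_in_engel_distribution_general
    (V : Type*) [AddCommGroup V] [Module ℂ V]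
    (V₁ V₂ V₃ : V)
    (E : Submodule ℂ V) (hE : E = Submodule.span ℂ {V₁, V₂, V₃})
    (β : V →ₗ[ℂ] V →ₗ[ℂ] V)
    (halt : ∀ v : V, β v v = 0)
    (h12 : β V₁ V₂ = V₃)
    (h23 : β V₂ V₃ ∉ E)
    (a b c : ℂ)
    (h2 : β V₂ (a • V₁ + b • V₂ + c • V₃) ∈ E) :
    c = 0 := by
  have hV₃ : V₃ ∈ E := hE ▸ Submodule.subset_span (by simp)
  rw [LinearMap.IsAlt.apply_smul_add_smul_add_smul halt, h12] at h2
  exact Submodule.eq_zero_of_add_smul_mem (E.neg_mem (E.smul_mem a hV₃)) h23 h2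

/-- Pointwise algebraic content of "the kernel line field is contained in `D`":
let `V₁, V₂, V₃` be linearly independent vectors spanning `E`, and `β` a bilinear
alternating map with `β(V₁,V₂) = V₃` and `β(V₂,V₃) ∉ E`. If `v = aV₁ + bV₂ + cV₃`
satisfies `β(Vᵢ, v) ∈ E` for `i = 1,2,3`, then `c = 0`. -/
theorem kernel_contained_in_engel_distribution
    (V : Type*) [AddCommGroup V] [Module ℂ V] [FiniteDimensional ℂ V]
    (V₁ V₂ V₃ : V)
    (hind : LinearIndependent ℂ ![V₁, V₂, V₃])
    (E : Submodule ℂ V) (hE : E = Submodule.span ℂ {V₁, V₂, V₃})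
    (β : V →ₗ[ℂ] V →ₗ[ℂ] V)
    (halt : ∀ v : V, β v v = 0)
    (h12 : β V₁ V₂ = V₃)
    (h23 : β V₂ V₃ ∉ E)
    (a b c : ℂ)
    (h1 : β V₁ (a • V₁ + b • V₂ + c • V₃) ∈ E)
    (h2 : β V₂ (a • V₁ + b • V₂ + c • V₃) ∈ E)
    (h3 : β V₃ (a • V₁ + b • V₂ + c • V₃) ∈ E) :
    c = 0 :=
  kernel_contained_in_engel_distribution_general V V₁ V₂ V₃ E hE β halt h12 h23 a b c h2
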